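/- If t_I, t_II > 0 with t_II < π√(L1C1), and ε > 0, then M_ε = e^{A_I ε} e^{A_II t_II} e^{A_I t_I} satisfies M_εᵀ P M_ε − P < 0 (strictly negative definite); moreover for ε = 0 the spectral radius of M_0 is strictly less than 1. -/

import Mathlib

/-!
The energy `x ⬝ᵥ P *ᵥ x` is a Lyapunov function for both phases: `P * A = A^q / 2` and the
symmetric part of either `A^q` is `-diag(0, 0, 0, 1/R)`, so along either flow the energy decays
at rate `(x 3)² / R`. Equality over a phase-I interval forces `x 3 ≡ 0`; differentiating along
the flow then puts the state on `ker A_I = span e₀`, which phase I fixes. Phase II rotates `e₀`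
in the `(e₀, e₂)` plane with angular frequency `1 / √(L₁C₁)`, and `0 < t_II < π √(L₁C₁)` keeps
it off that line, so the next phase-I interval dissipates strictly. Hence the energy strictly
decreases under `M_ε` for `ε > 0` and under `M₀²`; the latter is a strict Stein inequality for
`M₀²`, which puts the spectrum of `M₀²`, hence that of `M₀`, inside the unit disc.
-/

open Matrix NormedSpace Set

section LinearFlow

attribute [local instance] Matrix.linftyOpNormedRing Matrix.linftyOpNormedAlgebra

variable {n : Type*} [Fintype n]

theorem HasDerivAt.dotProduct {𝕜 : Type*} [NontriviallyNormedField 𝕜] {u w : 𝕜 → n → 𝕜}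
    {u' w' : n → 𝕜} {t : 𝕜}
    (hu : HasDerivAt u u' t) (hw : HasDerivAt w w' t) :
    HasDerivAt (fun s => u s ⬝ᵥ w s) (u' ⬝ᵥ w t + u t ⬝ᵥ w') t :=
  (HasDerivAt.fun_sum fun i _ => (hasDerivAt_pi.1 hu i).mul (hasDerivAt_pi.1 hw i))
    |>.congr_deriv (by simp only [Finset.sum_add_distrib]; rfl)

theorem HasDerivAt.const_mulVec {𝕜 : Type*} [NontriviallyNormedField 𝕜] {u : 𝕜 → n → 𝕜}
    {u' : n → 𝕜} {t : 𝕜} (P : Matrix n n 𝕜) (hu : HasDerivAt u u' t) :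
    HasDerivAt (fun s => P *ᵥ u s) (P *ᵥ u') t :=
  hasDerivAt_pi.2 fun i => HasDerivAt.fun_sum fun j _ => (hasDerivAt_pi.1 hu j).const_mul (P i j)

theorem hasDerivAt_cos_smul_add_sin_smul {E : Type*} [NormedAddCommGroup E] [NormedSpace ℝ E]
    (a b : E) (ω s : ℝ) :
    HasDerivAt (fun s => Real.cos (ω * s) • a + Real.sin (ω * s) • b)
      ((-Real.sin (ω * s) * ω) • a + (Real.cos (ω * s) * ω) • b) s := by
  have hl : HasDerivAt (fun s => ω * s) ω s := by simpa using (hasDerivAt_id s).const_mul ω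
  exact (((Real.hasDerivAt_cos _).comp s hl).smul_const a).add
    (((Real.hasDerivAt_sin _).comp s hl).smul_const b)

variable [DecidableEq n]

theorem hasDerivAt_exp_smul_mulVec (A : Matrix n n ℝ) (x : n → ℝ) (t : ℝ) :
    HasDerivAt (fun s : ℝ => exp (s • A) *ᵥ x) (A *ᵥ (exp (t • A) *ᵥ x)) t := by
  rw [mulVec_mulVec]
  exact (LinearMap.toContinuousLinearMap ((mulVecBilin ℝ ℝ).flip x)).hasFDerivAt
    |>.comp_hasDerivAt t (hasDerivAt_exp_smul_const' A t)

theorem eq_exp_smul_mulVec_of_hasDerivAt {A : Matrix n n ℝ} {u : ℝ → n → ℝ}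
    (hu : ∀ s, HasDerivAt u (A *ᵥ u s) s) (t : ℝ) : u t = exp (t • A) *ᵥ u 0 := by
  have hlip : LipschitzWith _ (LinearMap.toContinuousLinearMap A.mulVecLin) :=
    ContinuousLinearMap.lipschitz _
  refine congrFun (ODE_solution_unique_univ (v := fun _ => (A *ᵥ ·)) (s := fun _ => univ)
    (t₀ := 0) (fun _ => hlip.lipschitzOnWith) (fun s => ⟨hu s, trivial⟩)
    (fun s => ⟨hasDerivAt_exp_smul_mulVec A (u 0) s, trivial⟩) ?_) t
  simp

theorem exp_smul_mulVec_of_mulVec_eq_zero {A : Matrix n n ℝ} {x : n → ℝ} (hx : A *ᵥ x = 0)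
    (t : ℝ) : exp (t • A) *ᵥ x = x :=
  (eq_exp_smul_mulVec_of_hasDerivAt (u := fun _ => x)
    (fun s => by simpa [hx] using hasDerivAt_const s x) t).symm

theorem exp_neg_smul_mulVec_exp_smul_mulVec (A : Matrix n n ℝ) (x : n → ℝ) (t : ℝ) :
    exp ((-t) • A) *ᵥ (exp (t • A) *ᵥ x) = x := by
  rw [mulVec_mulVec,
    ← Matrix.exp_add_of_commute _ _ (((Commute.refl A).smul_left _).smul_right _), neg_smul,
    neg_add_cancel, exp_zero, one_mulVec]

theorem hasDerivAt_energy_exp_smul (P A : Matrix n n ℝ) (x : n → ℝ) (t : ℝ) :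
    HasDerivAt (fun s : ℝ => (exp (s • A) *ᵥ x) ⬝ᵥ P *ᵥ (exp (s • A) *ᵥ x))
      ((exp (t • A) *ᵥ x) ⬝ᵥ (Aᵀ * P + P * A) *ᵥ (exp (t • A) *ᵥ x)) t := by
  have hy := hasDerivAt_exp_smul_mulVec A x t
  refine (hy.dotProduct (hy.const_mulVec P)).congr_deriv ?_
  rw [add_mulVec, dotProduct_add, ← mulVec_mulVec, ← mulVec_mulVec, dotProduct_mulVec _ Aᵀ,
    vecMul_transpose]

variable {P A : Matrix n n ℝ}

theorem antitone_energy_exp_smul (hA : ∀ v, v ⬝ᵥ (Aᵀ * P + P * A) *ᵥ v ≤ 0) (x : n → ℝ) :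
    Antitone fun s : ℝ => (exp (s • A) *ᵥ x) ⬝ᵥ P *ᵥ (exp (s • A) *ᵥ x) :=
  antitone_of_deriv_nonpos (fun s => (hasDerivAt_energy_exp_smul P A x s).differentiableAt)
    fun s => (hasDerivAt_energy_exp_smul P A x s).deriv ▸ hA _

theorem energy_exp_smul_le (hA : ∀ v, v ⬝ᵥ (Aᵀ * P + P * A) *ᵥ v ≤ 0) (x : n → ℝ) {t : ℝ}
    (ht : 0 ≤ t) : (exp (t • A) *ᵥ x) ⬝ᵥ P *ᵥ (exp (t • A) *ᵥ x) ≤ x ⬝ᵥ P *ᵥ x := by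
  simpa using antitone_energy_exp_smul hA x ht

theorem dissipation_eq_zero_of_energy_eq (hA : ∀ v, v ⬝ᵥ (Aᵀ * P + P * A) *ᵥ v ≤ 0)
    {x : n → ℝ} {t : ℝ}
    (heq : (exp (t • A) *ᵥ x) ⬝ᵥ P *ᵥ (exp (t • A) *ᵥ x) = x ⬝ᵥ P *ᵥ x) :
    ∀ s ∈ Ioo 0 t, (exp (s • A) *ᵥ x) ⬝ᵥ (Aᵀ * P + P * A) *ᵥ (exp (s • A) *ᵥ x) = 0 := by
  have hf := antitone_energy_exp_smul hA x
  have hconst : ∀ s ∈ Icc 0 t,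
      (exp (s • A) *ᵥ x) ⬝ᵥ P *ᵥ (exp (s • A) *ᵥ x) = x ⬝ᵥ P *ᵥ x := fun s hs =>
    le_antisymm (by simpa using hf hs.1) (heq ▸ hf hs.2)
  intro s hs
  refine (hasDerivAt_energy_exp_smul P A x s).unique
    ((hasDerivAt_const s (x ⬝ᵥ P *ᵥ x)).congr_of_eventuallyEq ?_)
  filter_upwards [Ioo_mem_nhds hs.1 hs.2] with r hr using hconst r (Ioo_subset_Icc_self hr)

theorem mulVec_exp_smul_mulVec_apply_eq_zero {x : n → ℝ} {U : Set ℝ} (hU : IsOpen U)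
    {j : n} (h : ∀ s ∈ U, (exp (s • A) *ᵥ x) j = 0) :
    ∀ s ∈ U, (A *ᵥ (exp (s • A) *ᵥ x)) j = 0 := fun s hs =>
  (hasDerivAt_pi.1 (hasDerivAt_exp_smul_mulVec A x s) j).unique <|
    (hasDerivAt_const s 0).congr_of_eventuallyEq (Filter.eventually_of_mem (hU.mem_nhds hs) h)

end LinearFlow

section Contraction

variable {n : Type*} [Fintype n]

theorem dotProduct_transpose_mul_mul_mulVec {R : Type*} [CommSemiring R] (P N : Matrix n n R)
    (x y : n → R) : x ⬝ᵥ (Nᵀ * P * N) *ᵥ y = (N *ᵥ x) ⬝ᵥ P *ᵥ (N *ᵥ y) := by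
  rw [← mulVec_mulVec, ← mulVec_mulVec, dotProduct_mulVec, vecMul_transpose]

theorem dotProduct_transpose_mul_add_mul_mulVec {P A Q : Matrix n n ℝ} (hP : Pᵀ = P)
    (hPA : P * A = (1/2 : ℝ) • Q) (v : n → ℝ) :
    v ⬝ᵥ (Aᵀ * P + P * A) *ᵥ v = v ⬝ᵥ Q *ᵥ v := by
  have hAP : Aᵀ * P = (1/2 : ℝ) • Qᵀ := by
    rw [← hP, ← transpose_mul, hPA, transpose_smul]
  rw [hAP, hPA, ← smul_add, smul_mulVec, dotProduct_smul, add_mulVec, dotProduct_add,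
    mulVec_transpose, dotProduct_comm, ← dotProduct_mulVec, smul_eq_mul]
  ring

theorem mulVec_eq_div_of_half_smul_diagonal_mul_eq [DecidableEq n] {d : n → ℝ}
    (hd : ∀ i, d i ≠ 0) {A Q : Matrix n n ℝ} (hA : (1/2 : ℝ) • diagonal d * A = (1/2 : ℝ) • Q)
    (y : n → ℝ) : A *ᵥ y = fun i => (Q *ᵥ y) i / d i := by
  ext i
  have := congrFun (congrArg (· *ᵥ y) hA) i
  simp only [smul_mul, ← mulVec_mulVec, smul_mulVec, mulVec_diagonal, Pi.smul_apply,
    smul_eq_mul] at this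
  field_simp [hd i]
  linarith

theorem energy_mul_mul_mulVec_lt {P F G H : Matrix n n ℝ} {S : Set (n → ℝ)}
    (hF : ∀ y, (F *ᵥ y) ⬝ᵥ P *ᵥ (F *ᵥ y) ≤ y ⬝ᵥ P *ᵥ y)
    (hG : ∀ y, (G *ᵥ y) ⬝ᵥ P *ᵥ (G *ᵥ y) ≤ y ⬝ᵥ P *ᵥ y)
    (hH : ∀ y, (H *ᵥ y) ⬝ᵥ P *ᵥ (H *ᵥ y) ≤ y ⬝ᵥ P *ᵥ y)
    (hFS : ∀ y, (F *ᵥ y) ⬝ᵥ P *ᵥ (F *ᵥ y) = y ⬝ᵥ P *ᵥ y → y ∈ S ∧ F *ᵥ y = y)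
    (hHS : ∀ y, (H *ᵥ y) ⬝ᵥ P *ᵥ (H *ᵥ y) = y ⬝ᵥ P *ᵥ y → y ∈ S)
    (hGS : ∀ y ∈ S, G *ᵥ y ∈ S → y = 0) {x : n → ℝ} (hx : x ≠ 0) :
    ((H * G * F) *ᵥ x) ⬝ᵥ P *ᵥ ((H * G * F) *ᵥ x) < x ⬝ᵥ P *ᵥ x := by
  rw [← mulVec_mulVec, ← mulVec_mulVec]
  refine ((hH _).trans ((hG _).trans (hF x))).lt_of_ne fun heq => hx ?_
  have hFx : (F *ᵥ x) ⬝ᵥ P *ᵥ (F *ᵥ x) = x ⬝ᵥ P *ᵥ x :=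
    le_antisymm (hF x) (heq ▸ (hH _).trans (hG _))
  obtain ⟨hxS, hFx⟩ := hFS x hFx
  rw [hFx] at heq
  exact hGS x hxS (hHS _ (le_antisymm (hH _) (heq ▸ hG x)))

theorem posDef_sub_transpose_mul_mul {P N : Matrix n n ℝ} (hP : Pᵀ = P)
    (h : ∀ x ≠ 0, (N *ᵥ x) ⬝ᵥ P *ᵥ (N *ᵥ x) < x ⬝ᵥ P *ᵥ x) :
    (P - Nᵀ * P * N).PosDef := by
  refine .of_dotProduct_mulVec_pos ?_ fun x hx => ?_
  · simp [IsHermitian, transpose_sub, transpose_mul, hP, Matrix.mul_assoc]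
  · rw [star_trivial, sub_mulVec, dotProduct_sub, dotProduct_transpose_mul_mul_mulVec]
    exact sub_pos.2 (h x hx)

theorem re_star_dotProduct_map_ofReal_mulVec (Q : Matrix n n ℝ) (v : n → ℂ) :
    (star v ⬝ᵥ Q.map Complex.ofReal *ᵥ v).re =
      (fun i => (v i).re) ⬝ᵥ Q *ᵥ (fun i => (v i).re) +
        (fun i => (v i).im) ⬝ᵥ Q *ᵥ (fun i => (v i).im) := by
  simp only [dotProduct, mulVec, Complex.re_sum, Finset.mul_sum, ← Finset.sum_add_distrib]
  refine Finset.sum_congr rfl fun i _ => Finset.sum_congr rfl fun j _ => ?_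
  simp

theorem Matrix.PosDef.re_star_dotProduct_map_ofReal_mulVec_pos {Q : Matrix n n ℝ}
    (hQ : Q.PosDef) {v : n → ℂ} (hv : v ≠ 0) :
    0 < (star v ⬝ᵥ Q.map Complex.ofReal *ᵥ v).re := by
  rw [re_star_dotProduct_map_ofReal_mulVec]
  have hq : ∀ x : n → ℝ, 0 ≤ x ⬝ᵥ Q *ᵥ x := fun x => by
    simpa using hQ.posSemidef.dotProduct_mulVec_nonneg x
  by_cases hre : (fun i => (v i).re) = 0
  · have him : (fun i => (v i).im) ≠ 0 := fun him => hv <| funext fun i =>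
      Complex.ext (congrFun hre i) (congrFun him i)
    simpa using add_pos_of_nonneg_of_pos (hq _) (by simpa using hQ.dotProduct_mulVec_pos him)
  · simpa using add_pos_of_pos_of_nonneg (by simpa using hQ.dotProduct_mulVec_pos hre) (hq _)

variable [DecidableEq n]

theorem exists_mulVec_eq_smul_of_mem_spectrum {N : Matrix n n ℂ} {z : ℂ}
    (hz : z ∈ spectrum ℂ N) : ∃ v ≠ 0, N *ᵥ v = z • v := by
  rw [← spectrum_toLin', ← Module.End.hasEigenvalue_iff_mem_spectrum] at hz
  obtain ⟨v, hv⟩ := hz.exists_hasEigenvector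
  exact ⟨v, hv.2, by simpa using hv.apply_eq_smul⟩

theorem norm_lt_one_of_posDef_sub_transpose_mul_mul {P N : Matrix n n ℝ} (hP : P.PosDef)
    (hN : (P - Nᵀ * P * N).PosDef) {z : ℂ} (hz : z ∈ spectrum ℂ (N.map Complex.ofReal)) :
    ‖z‖ < 1 := by
  obtain ⟨v, hv, hNv⟩ := exists_mulVec_eq_smul_of_mem_spectrum hz
  have hmul (A B : Matrix n n ℝ) :
      (A * B).map Complex.ofReal = A.map Complex.ofReal * B.map Complex.ofReal :=
    Matrix.map_mul (f := Complex.ofRealHom) (L := A) (M := B)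
  have hstar : N.map Complex.ofReal *ᵥ star v = star (z • v) := by
    rw [← hNv]; ext i; simp [mulVec, dotProduct]
  have hform : star v ⬝ᵥ (P - Nᵀ * P * N).map Complex.ofReal *ᵥ v =
      (1 - ‖z‖ ^ 2 : ℝ) * (star v ⬝ᵥ P.map Complex.ofReal *ᵥ v) := by
    rw [Matrix.map_sub _ Complex.ofReal_sub, hmul, hmul, transpose_map, sub_mulVec,
      dotProduct_sub, dotProduct_transpose_mul_mul_mulVec, hstar, hNv, star_smul,
      smul_dotProduct, mulVec_smul, dotProduct_smul, smul_eq_mul, smul_eq_mul, ← mul_assoc]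
    simp [Complex.conj_mul', sub_mul]
  have h := hN.re_star_dotProduct_map_ofReal_mulVec_pos hv
  rw [hform, Complex.re_ofReal_mul] at h
  have := hP.re_star_dotProduct_map_ofReal_mulVec_pos hv
  nlinarith [norm_nonneg z, pos_of_mul_pos_left h this.le]

end Contraction

section Circuit

variable {L1 L2 C1 C2 R : ℝ}

theorem dotProduct_stageI_mulVec (v : Fin 4 → ℝ) :
    v ⬝ᵥ !![0, 0, 0, 0; 0, 0, 1, 1; 0, -1, 0, 0; 0, -1, 0, -1 / R] *ᵥ v = -(v 3 ^ 2 / R) := by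
  simp [dotProduct, mulVec, Fin.sum_univ_four]
  ring

theorem dotProduct_stageII_mulVec (v : Fin 4 → ℝ) :
    v ⬝ᵥ !![0, 0, -1, 0; 0, 0, 0, 1; 1, 0, 0, 0; 0, -1, 0, -1 / R] *ᵥ v = -(v 3 ^ 2 / R) := by
  simp [dotProduct, mulVec, Fin.sum_univ_four]
  ring

variable {A : Matrix (Fin 4) (Fin 4) ℝ}

theorem mulVec_stageI (hL1 : L1 ≠ 0) (hL2 : L2 ≠ 0) (hC1 : C1 ≠ 0) (hC2 : C2 ≠ 0)
    (hA : (1/2 : ℝ) • diagonal ![L1, L2, C1, C2] * A =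
      (1/2 : ℝ) • !![0, 0, 0, 0; 0, 0, 1, 1; 0, -1, 0, 0; 0, -1, 0, -1 / R])
    (y : Fin 4 → ℝ) :
    A *ᵥ y = ![0, (y 2 + y 3) / L2, -y 1 / C1, -(y 1 + y 3 / R) / C2] := by
  rw [mulVec_eq_div_of_half_smul_diagonal_mul_eq (by simp [Fin.forall_fin_succ, *]) hA]
  ext i
  fin_cases i <;> simp [mulVec, dotProduct, Fin.sum_univ_four]
  ring

theorem mulVec_stageII (hL1 : L1 ≠ 0) (hL2 : L2 ≠ 0) (hC1 : C1 ≠ 0) (hC2 : C2 ≠ 0)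
    (hA : (1/2 : ℝ) • diagonal ![L1, L2, C1, C2] * A =
      (1/2 : ℝ) • !![0, 0, -1, 0; 0, 0, 0, 1; 1, 0, 0, 0; 0, -1, 0, -1 / R])
    (y : Fin 4 → ℝ) :
    A *ᵥ y = ![-y 2 / L1, y 3 / L2, y 0 / C1, -(y 1 + y 3 / R) / C2] := by
  rw [mulVec_eq_div_of_half_smul_diagonal_mul_eq (by simp [Fin.forall_fin_succ, *]) hA]
  ext i
  fin_cases i <;> simp [mulVec, dotProduct, Fin.sum_univ_four]
  ring

theorem mulVec_eq_zero_of_energy_exp_smul_eq (hR : 0 < R) (hL2 : L2 ≠ 0) (hC2 : C2 ≠ 0)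
    {P : Matrix (Fin 4) (Fin 4) ℝ}
    (hA : ∀ y, A *ᵥ y = ![0, (y 2 + y 3) / L2, -y 1 / C1, -(y 1 + y 3 / R) / C2])
    (hdiss : ∀ v, v ⬝ᵥ (Aᵀ * P + P * A) *ᵥ v = -(v 3 ^ 2 / R)) {x : Fin 4 → ℝ} {t : ℝ}
    (ht : 0 < t) (heq : (exp (t • A) *ᵥ x) ⬝ᵥ P *ᵥ (exp (t • A) *ᵥ x) = x ⬝ᵥ P *ᵥ x) :
    A *ᵥ x = 0 := by
  have hdiss_nonpos : ∀ v, v ⬝ᵥ (Aᵀ * P + P * A) *ᵥ v ≤ 0 := fun v => by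
    rw [hdiss]; exact neg_nonpos.2 (by positivity)
  have h3 : ∀ s ∈ Ioo 0 t, (exp (s • A) *ᵥ x) 3 = 0 := fun s hs => by
    have := dissipation_eq_zero_of_energy_eq hdiss_nonpos heq s hs
    rw [hdiss] at this
    simpa [hR.ne'] using this
  have h1 : ∀ s ∈ Ioo 0 t, (exp (s • A) *ᵥ x) 1 = 0 := fun s hs => by
    simpa [hA, h3 s hs, hC2] using mulVec_exp_smul_mulVec_apply_eq_zero isOpen_Ioo h3 s hs
  have h2 : ∀ s ∈ Ioo 0 t, (exp (s • A) *ᵥ x) 2 = 0 := fun s hs => by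
    simpa [hA, h3 s hs, hL2] using mulVec_exp_smul_mulVec_apply_eq_zero isOpen_Ioo h1 s hs
  have hs : t / 2 ∈ Ioo 0 t := ⟨half_pos ht, half_lt_self ht⟩
  have hker : A *ᵥ (exp ((t / 2) • A) *ᵥ x) = 0 := by
    rw [hA]; simp [h1 _ hs, h2 _ hs, h3 _ hs]
  rw [← exp_neg_smul_mulVec_exp_smul_mulVec A x (t / 2),
    exp_smul_mulVec_of_mulVec_eq_zero hker, hker]

theorem exp_smul_mulVec_eq_cos_smul_add_sin_smul (hL1 : L1 ≠ 0) {ω : ℝ}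
    (hω : L1 * C1 * ω ^ 2 = 1)
    (hA : ∀ y, A *ᵥ y = ![-y 2 / L1, y 3 / L2, y 0 / C1, -(y 1 + y 3 / R) / C2]) (α t : ℝ) :
    exp (t • A) *ᵥ ![α, 0, 0, 0] =
      Real.cos (ω * t) • ![α, 0, 0, 0] + Real.sin (ω * t) • ![0, 0, α * L1 * ω, 0] := by
  have hC1 : C1 ≠ 0 := by rintro rfl; simp at hω
  have hu : ∀ s, HasDerivAt (fun s => Real.cos (ω * s) • ![α, 0, 0, 0] +
      Real.sin (ω * s) • ![0, 0, α * L1 * ω, 0])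
      (A *ᵥ (Real.cos (ω * s) • ![α, 0, 0, 0] + Real.sin (ω * s) • ![0, 0, α * L1 * ω, 0]))
      s := fun s => by
    refine (hasDerivAt_cos_smul_add_sin_smul _ _ ω s).congr_deriv ?_
    rw [hA]; ext i; fin_cases i <;> simp
    · field_simp
    · field_simp; linear_combination α * Real.cos (ω * s) * hω
  simpa using (eq_exp_smul_mulVec_of_hasDerivAt hu t).symm

theorem eq_zero_of_mulVec_exp_smul_mulVec_eq_zero {AI AII : Matrix (Fin 4) (Fin 4) ℝ}
    (hL1 : 0 < L1) (hL2 : L2 ≠ 0) (hC1 : 0 < C1) (hC2 : C2 ≠ 0) (hR : R ≠ 0)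
    (hAI : ∀ y, AI *ᵥ y = ![0, (y 2 + y 3) / L2, -y 1 / C1, -(y 1 + y 3 / R) / C2])
    (hAII : ∀ y, AII *ᵥ y = ![-y 2 / L1, y 3 / L2, y 0 / C1, -(y 1 + y 3 / R) / C2])
    {t : ℝ} (ht : 0 < t) (htub : t < Real.pi * √(L1 * C1)) {y : Fin 4 → ℝ}
    (hy : AI *ᵥ y = 0) (hGy : AI *ᵥ (exp (t • AII) *ᵥ y) = 0) : y = 0 := by
  rw [hAI] at hy
  have hy1 : y 1 = 0 := by simpa [hC1.ne'] using congrFun hy 2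
  have hy3 : y 3 = 0 := by simpa [hy1, hC2, hR] using congrFun hy 3
  have hy2 : y 2 = 0 := by simpa [hy3, hL2] using congrFun hy 1
  have hyv : y = ![y 0, 0, 0, 0] := by ext i; fin_cases i <;> simp [hy1, hy2, hy3]
  have hsqrt : 0 < √(L1 * C1) := Real.sqrt_pos.2 (by positivity)
  have hω : L1 * C1 * (√(L1 * C1))⁻¹ ^ 2 = 1 := by
    rw [inv_pow, Real.sq_sqrt (by positivity), mul_inv_cancel₀ (by positivity)]
  have hsin : 0 < Real.sin ((√(L1 * C1))⁻¹ * t) :=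
    Real.sin_pos_of_pos_of_lt_pi (by positivity) (by rw [inv_mul_lt_iff₀ hsqrt]; linarith)
  rw [hyv, exp_smul_mulVec_eq_cos_smul_add_sin_smul hL1.ne' hω hAII, hAI] at hGy
  have h := congrFun hGy 1
  simp [hL2, hL1.ne', hsin.ne', hsqrt.ne'] at h
  rw [hyv, h]
  simp

-- The leading factor `exp (r • AII)` gives `M_ε` for `r = 0` and `M₀²` for `r = t_II`.
theorem energy_mulVec_cycle_lt {P AI AII : Matrix (Fin 4) (Fin 4) ℝ}
    (hL1 : 0 < L1) (hL2 : L2 ≠ 0) (hC1 : 0 < C1) (hC2 : C2 ≠ 0) (hR : 0 < R)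
    (hAI : ∀ y, AI *ᵥ y = ![0, (y 2 + y 3) / L2, -y 1 / C1, -(y 1 + y 3 / R) / C2])
    (hAII : ∀ y, AII *ᵥ y = ![-y 2 / L1, y 3 / L2, y 0 / C1, -(y 1 + y 3 / R) / C2])
    (hdI : ∀ v, v ⬝ᵥ (AIᵀ * P + P * AI) *ᵥ v = -(v 3 ^ 2 / R))
    (hdII : ∀ v, v ⬝ᵥ (AIIᵀ * P + P * AII) *ᵥ v = -(v 3 ^ 2 / R))
    {tI tII : ℝ} (htI : 0 < tI) (htII : 0 < tII) (htIIub : tII < Real.pi * √(L1 * C1))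
    ⦃r s : ℝ⦄ (hr : 0 ≤ r) (hs : 0 < s) ⦃x : Fin 4 → ℝ⦄ (hx : x ≠ 0) :
    ((exp (r • AII) * exp (s • AI) * exp (tII • AII) * exp (tI • AI)) *ᵥ x) ⬝ᵥ
      P *ᵥ ((exp (r • AII) * exp (s • AI) * exp (tII • AII) * exp (tI • AI)) *ᵥ x) <
        x ⬝ᵥ P *ᵥ x := by
  have hdI' : ∀ v, v ⬝ᵥ (AIᵀ * P + P * AI) *ᵥ v ≤ 0 := fun v => by
    rw [hdI]; exact neg_nonpos.2 (by positivity)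
  have hdII' : ∀ v, v ⬝ᵥ (AIIᵀ * P + P * AII) *ᵥ v ≤ 0 := fun v => by
    rw [hdII]; exact neg_nonpos.2 (by positivity)
  have hker : ∀ {t : ℝ}, 0 < t → ∀ y, (exp (t • AI) *ᵥ y) ⬝ᵥ P *ᵥ (exp (t • AI) *ᵥ y) =
      y ⬝ᵥ P *ᵥ y → AI *ᵥ y = 0 := fun ht _ =>
    mulVec_eq_zero_of_energy_exp_smul_eq hR hL2 hC2 hAI hdI ht
  have hH : ∀ y,
      ((exp (r • AII) * exp (s • AI)) *ᵥ y) ⬝ᵥ P *ᵥ ((exp (r • AII) * exp (s • AI)) *ᵥ y) ≤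
        (exp (s • AI) *ᵥ y) ⬝ᵥ P *ᵥ (exp (s • AI) *ᵥ y) := fun y => by
    rw [← mulVec_mulVec]; exact energy_exp_smul_le hdII' _ hr
  refine energy_mul_mul_mulVec_lt (S := {y | AI *ᵥ y = 0})
    (fun y => energy_exp_smul_le hdI' y htI.le) (fun y => energy_exp_smul_le hdII' y htII.le)
    (fun y => (hH y).trans (energy_exp_smul_le hdI' y hs.le))
    (fun y h => ⟨hker htI y h, exp_smul_mulVec_of_mulVec_eq_zero (hker htI y h) _⟩)
    (fun y h => hker hs y (le_antisymm (energy_exp_smul_le hdI' y hs.le) (h ▸ hH y)))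
    (fun y => eq_zero_of_mulVec_exp_smul_mulVec_eq_zero hL1 hL2 hC1 hC2 hR.ne' hAI hAII htII
      htIIub) hx

end Circuit

/-- if t_I, t_II > 0 with t_II < π√(L1C1), then for ε > 0 we have
M_εᵀPM_ε - P < 0, and for ε = 0 the spectral radius of M_0 is strictly less than 1. -/
theorem Meps_contraction
    (L1 L2 C1 C2 R : ℝ) (hL1 : 0 < L1) (hL2 : 0 < L2) (hC1 : 0 < C1)
    (hC2 : 0 < C2) (hR : 0 < R)
    (P : Matrix (Fin 4) (Fin 4) ℝ) (hP : P = (1/2 : ℝ) • Matrix.diagonal ![L1, L2, C1, C2])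
    (AIq AIIq : Matrix (Fin 4) (Fin 4) ℝ)
    (hAIq : AIq = !![0,0,0,0; 0,0,1,1; 0,-1,0,0; 0,-1,0,-1/R])
    (hAIIq : AIIq = !![0,0,-1,0; 0,0,0,1; 1,0,0,0; 0,-1,0,-1/R])
    (AI AII : Matrix (Fin 4) (Fin 4) ℝ)
    (hAI : AI = (1/2 : ℝ) • (P⁻¹ * AIq)) (hAII : AII = (1/2 : ℝ) • (P⁻¹ * AIIq))
    (tI tII : ℝ) (htI : 0 < tI) (htII : 0 < tII)
    (htIIub : tII < Real.pi * Real.sqrt (L1 * C1))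
    (M : ℝ → Matrix (Fin 4) (Fin 4) ℝ)
    (hM : ∀ ε, M ε = NormedSpace.exp (ε • AI) * NormedSpace.exp (tII • AII) *
                     NormedSpace.exp (tI • AI)) :
    (∀ ε > (0:ℝ), (P - (M ε)ᵀ * P * M ε).PosDef) ∧
    (∀ z ∈ spectrum ℂ ((M 0).map Complex.ofReal), ‖z‖ < 1) := by
  have hPpos : P.PosDef :=
    hP ▸ (posDef_diagonal_iff.2 (by simp [Fin.forall_fin_succ, *])).smul (by norm_num)
  have hPT : Pᵀ = P := hPpos.isHermitian
  have hPdet := (isUnit_iff_isUnit_det P).1 hPpos.isUnit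
  have hPAI : P * AI = (1/2 : ℝ) • AIq := by
    rw [hAI, mul_smul_comm, mul_nonsing_inv_cancel_left _ _ hPdet]
  have hPAII : P * AII = (1/2 : ℝ) • AIIq := by
    rw [hAII, mul_smul_comm, mul_nonsing_inv_cancel_left _ _ hPdet]
  have hcycle := energy_mulVec_cycle_lt (P := P) hL1 hL2.ne' hC1 hC2.ne' hR
    (mulVec_stageI hL1.ne' hL2.ne' hC1.ne' hC2.ne' (hP ▸ hAIq ▸ hPAI))
    (mulVec_stageII hL1.ne' hL2.ne' hC1.ne' hC2.ne' (hP ▸ hAIIq ▸ hPAII))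
    (fun v => by
      rw [dotProduct_transpose_mul_add_mul_mulVec hPT hPAI, hAIq, dotProduct_stageI_mulVec])
    (fun v => by
      rw [dotProduct_transpose_mul_add_mul_mulVec hPT hPAII, hAIIq, dotProduct_stageII_mulVec])
    htI htII htIIub
  refine ⟨fun ε hε => posDef_sub_transpose_mul_mul hPT fun x hx => ?_, fun z hz => ?_⟩
  · simpa [hM] using hcycle le_rfl hε hx
  have hmap : (M 0 ^ 2).map Complex.ofReal = (M 0).map Complex.ofReal ^ 2 :=
    map_pow Complex.ofRealHom.mapMatrix (M 0) 2
  have hsq : ‖z ^ 2‖ < 1 := by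
    refine norm_lt_one_of_posDef_sub_transpose_mul_mul hPpos
      (posDef_sub_transpose_mul_mul hPT fun x hx => ?_) (hmap ▸ spectrum.pow_mem_pow _ 2 hz)
    simpa [sq, hM, Matrix.mul_assoc] using hcycle htII.le htI hx
  rw [norm_pow] at hsq
  exact (pow_lt_one_iff_of_nonneg (norm_nonneg z) two_ne_zero).1 hsq
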